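/- Let H = ([n],[m],E) be a bipartite graph and p a vector of positive reals. If there exists a cylinder set A_1,...,A_n in I^m that conforms with H, is exclusive with respect to H (i.e., μ(A_i ∩ A_j) = 0 whenever i ≠ j share a common neighbor in H), and satisfies μ(A_i) = p_i for all i, then p is not in the exterior of H; that is, for every ε ∈ (0,1), every cylinder set conforming with H with measure vector (1−ε)p has union of measure strictly less than 1. -/

import Mathlib

open MeasureTheory

/-- The uniform probability measure on the unit cube `[0,1]^m`, viewed as a measure
on `Fin m → ℝ`. -/
noncomputable def cubeMeasure (m : ℕ) : Measure (Fin m → ℝ) :=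
  Measure.pi fun _ => volume.restrict (Set.Icc 0 1)

/-- `A` is a cylinder depending only on the coordinates in `S`. -/
def DependsOnlyOn {m : ℕ} (A : Set (Fin m → ℝ)) (S : Set (Fin m)) : Prop :=
  ∀ x y : Fin m → ℝ, (∀ j ∈ S, x j = y j) → (x ∈ A ↔ y ∈ A)

/-- A cylinder set conforms with the bigraph given by edge relation `E`. -/
def Conforms {n m : ℕ} (E : Fin n → Fin m → Prop) (A : Fin n → Set (Fin m → ℝ)) : Prop :=
  (∀ i, MeasurableSet (A i)) ∧ ∀ i, DependsOnlyOn (A i) {j | E i j}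

/-!
Thin each `A i` by a fresh uniform coordinate: `A' i = A i × {u_i ≤ 1 - ε}` in `[0,1]^(m+n)` is
still exclusive, has measure `(1 - ε) p_i`, and misses the box `{u > 1 - ε}`, so the probability
that no `A' i` occurs is positive.

Write `P_X(V)` for the probability that no `X j` with `j ∈ V` occurs. An event is independent of the
events sharing no neighbour with it, so for `i ∉ V` we have
`P_X(V) ≤ P_X(V ∪ {i}) + μ(X i) P_X(V_i)`, where `V_i` consists of the `j ∈ V` sharing no neighbour
with `i`; exclusivity makes this an equality. Induction on `V` turns the two recursions into
`P_{A'}(V) P_B(U) ≤ P_B(V) P_{A'}(U)` for `U ⊆ V`, hence `P_B([n]) ≥ P_{A'}([n]) > 0`.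
-/

section DependsOn

variable {κ : Type*} {α : κ → Type*}

theorem dependsOnlyOn_iff_dependsOn {m : ℕ} {A : Set (Fin m → ℝ)} {S : Set (Fin m)} :
    DependsOnlyOn A S ↔ DependsOn (· ∈ A) S :=
  ⟨fun h _ _ hxy => propext (h _ _ hxy), fun h _ _ hxy => (h hxy).to_iff⟩

theorem DependsOn.mem_compl {X : Set (Π k, α k)} {S : Set κ} (h : DependsOn (· ∈ X) S) :
    DependsOn (· ∈ Xᶜ) S :=
  fun _ _ hxy => congrArg Not (h hxy)

theorem dependsOn_mem_biInter {ι : Type*} {D : ι → Set (Π k, α k)} {S : ι → Set κ}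
    (C : Set ι) (hD : ∀ i ∈ C, DependsOn (· ∈ D i) (S i)) :
    DependsOn (· ∈ ⋂ i ∈ C, D i) (⋃ i ∈ C, S i) := by
  intro x y hxy
  simp only [Set.mem_iInter, eq_iff_iff]
  refine forall₂_congr fun i hi => (hD i hi fun k hk => hxy k ?_).to_iff
  exact Set.mem_biUnion hi hk

variable [∀ k, MeasurableSpace (α k)]

theorem DependsOn.exists_restrict_preimage [DecidableEq κ] {X : Set (Π k, α k)} {T : Finset κ}
    (x₀ : Π k, α k) (hX : MeasurableSet X) (hXT : DependsOn (· ∈ X) T) :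
    ∃ X', MeasurableSet X' ∧ X = T.restrict ⁻¹' X' := by
  refine ⟨Function.updateFinset x₀ T ⁻¹' X, measurable_updateFinset hX, ?_⟩
  ext x
  refine (hXT fun k hk => ?_).to_iff
  simp [Function.updateFinset, Finset.mem_coe.mp hk]

theorem measure_pi_inter_eq_mul_of_dependsOn [Fintype κ] (ν : ∀ k, Measure (α k))
    [∀ k, IsProbabilityMeasure (ν k)] {X Y : Set (Π k, α k)} {S T : Set κ} (hST : Disjoint S T)
    (hX : MeasurableSet X) (hY : MeasurableSet Y)
    (hXS : DependsOn (· ∈ X) S) (hYT : DependsOn (· ∈ Y) T) :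
    Measure.pi ν (X ∩ Y) = Measure.pi ν X * Measure.pi ν Y := by
  classical
  rcases isEmpty_or_nonempty (Π k, α k) with hempty | ⟨⟨x₀⟩⟩
  · simp [Set.eq_empty_of_isEmpty]
  have hcoord := ProbabilityTheory.iIndepFun_pi (μ := ν) (X := fun _ => id) fun _ =>
    aemeasurable_id
  have hindep := hcoord.indepFun_finset S.toFinset T.toFinset (by simpa using hST)
    fun k => measurable_pi_apply k
  obtain ⟨X', hX', rfl⟩ :=
    DependsOn.exists_restrict_preimage x₀ hX (T := S.toFinset) (by simpa using hXS)
  obtain ⟨Y', hY', rfl⟩ :=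
    DependsOn.exists_restrict_preimage x₀ hY (T := T.toFinset) (by simpa using hYT)
  exact hindep.measure_inter_preimage_eq_mul X' Y' hX' hY'

end DependsOn

theorem mul_le_mul_of_avoidance_recursions {ι : Type*} [DecidableEq ι]
    (N : ι → Finset ι → Finset ι) (hN : ∀ i V, N i V ⊆ V) {q : ι → ℝ} {H P : Finset ι → ℝ}
    (hq : ∀ i, 0 ≤ q i) (hH : ∀ V, 0 < H V)
    (hHrec : ∀ i V, i ∉ V → H V = H (insert i V) + q i * H (N i V))
    (hPrec : ∀ i V, i ∉ V → P V ≤ P (insert i V) + q i * P (N i V))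
    {U V : Finset ι} (hUV : U ⊆ V) : H V * P U ≤ P V * H U := by
  induction V using Finset.strongInduction generalizing U with
  | H V ih =>
  obtain rfl | hUV' := hUV.eq_or_ssubset
  · exact (mul_comm _ _).le
  obtain ⟨i, hiV, hiU⟩ := Finset.exists_of_ssubset hUV'
  set W := V.erase i
  have hiW : i ∉ W := Finset.notMem_erase i V
  have hWV : W ⊂ V := Finset.erase_ssubset hiV
  have hUW : U ⊆ W := fun j hj => Finset.mem_erase.2 ⟨ne_of_mem_of_not_mem hj hiU, hUV hj⟩
  have hHrec := hHrec i W hiW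
  have hPrec := hPrec i W hiW
  rw [Finset.insert_erase hiV] at hHrec hPrec
  have ihN := ih W hWV (hN i W)
  have ihU := ih W hWV hUW
  -- The claim for the pair `W ⊆ V`; the one for `U ⊆ V` then follows by chaining through `W`.
  have hVW : H V * P W ≤ P V * H W := by
    have key : H W * P W ≤ P V * H W + q i * (H (N i W) * P W) :=
      calc H W * P W ≤ H W * (P V + q i * P (N i W)) := by gcongr; exact (hH W).le
        _ = H W * P V + q i * (H W * P (N i W)) := by ring
        _ ≤ H W * P V + q i * (P W * H (N i W)) := by gcongr; exact hq i
        _ = P V * H W + q i * (H (N i W) * P W) := by ring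
    have expand : H W * P W = H V * P W + q i * (H (N i W) * P W) := by rw [hHrec]; ring
    linarith
  refine le_of_mul_le_mul_right ?_ (hH W)
  calc H V * P U * H W = H V * (H W * P U) := by ring
    _ ≤ H V * (P W * H U) := by gcongr; exact (hH V).le
    _ = H V * P W * H U := by ring
    _ ≤ P V * H W * H U := by gcongr; exact (hH U).le
    _ = P V * H U * H W := by ring

section Avoidance

variable {Ω ι : Type*} [MeasurableSpace Ω] (μ : Measure Ω) (G : ι → ι → Prop) (D : ι → Set Ω)

noncomputable def avoidProb (V : Finset ι) : ℝ := μ.real (⋂ j ∈ V, (D j)ᶜ)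

def IndepOfNonNeighbors : Prop :=
  ∀ i (C : Finset ι), i ∉ C → (∀ j ∈ C, ¬ G i j) →
    μ.real (D i ∩ ⋂ j ∈ C, (D j)ᶜ) = μ.real (D i) * avoidProb μ D C

def IsExclusive : Prop := Pairwise fun i j => G i j → μ (D i ∩ D j) = 0

variable {μ G D} [IsFiniteMeasure μ] [DecidableEq ι]

theorem avoidProb_insert_add {i : ι} (hDi : MeasurableSet (D i)) (V : Finset ι) :
    avoidProb μ D (insert i V) + μ.real (D i ∩ ⋂ j ∈ V, (D j)ᶜ) = avoidProb μ D V := by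
  rw [avoidProb, avoidProb, Finset.set_biInter_insert, add_comm, Set.inter_comm (D i),
    Set.inter_comm (D i)ᶜ, ← Set.sdiff_eq, measureReal_inter_add_sdiff hDi]

variable [DecidableRel G]

theorem avoidProb_le_insert_add_mul (hD : ∀ i, MeasurableSet (D i))
    (hindep : IndepOfNonNeighbors μ G D) {i : ι} {V : Finset ι} (hiV : i ∉ V) :
    avoidProb μ D V ≤
      avoidProb μ D (insert i V) + μ.real (D i) * avoidProb μ D {j ∈ V | ¬ G i j} := by
  rw [← avoidProb_insert_add (hD i) V, ← hindep i _ (fun h => hiV (Finset.mem_filter.1 h).1)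
    fun j hj => (Finset.mem_filter.1 hj).2]
  have hsub : ⋂ j ∈ V, (D j)ᶜ ⊆ ⋂ j ∈ {j ∈ V | ¬ G i j}, (D j)ᶜ :=
    Set.biInter_mono (Finset.coe_subset.2 (Finset.filter_subset _ V)) fun _ _ => subset_rfl
  exact add_le_add_right (measureReal_mono (μ := μ) (Set.inter_subset_inter_right (D i) hsub)) _

theorem avoidProb_eq_insert_add_mul (hD : ∀ i, MeasurableSet (D i))
    (hindep : IndepOfNonNeighbors μ G D) (hexcl : IsExclusive μ G D) {i : ι} {V : Finset ι}
    (hiV : i ∉ V) :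
    avoidProb μ D V =
      avoidProb μ D (insert i V) + μ.real (D i) * avoidProb μ D {j ∈ V | ¬ G i j} := by
  rw [← avoidProb_insert_add (hD i) V, ← hindep i _ (fun h => hiV (Finset.mem_filter.1 h).1)
    fun j hj => (Finset.mem_filter.1 hj).2]
  congr 1
  -- By exclusivity, almost surely no neighbour of `i` occurs together with `D i`.
  have hnull : ∀ᵐ x ∂μ, ∀ j ∈ V, G i j → x ∈ D i → x ∉ D j := by
    refine (Filter.eventually_all_finset V).2 fun j hj => ?_
    by_cases hG : G i j
    · filter_upwards [measure_eq_zero_iff_ae_notMem.1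
        (hexcl (ne_of_mem_of_not_mem hj hiV).symm hG)] with x hx _ hxi hxj using hx ⟨hxi, hxj⟩
    · exact Filter.Eventually.of_forall fun _ h => absurd h hG
  refine measureReal_congr (hnull.mono fun x hx => propext ?_)
  change x ∈ (_ : Set Ω) ↔ x ∈ (_ : Set Ω)
  simp only [Set.mem_iInter, Set.mem_compl_iff, Finset.mem_filter]
  grind

end Avoidance

theorem avoidProb_le_avoidProb_of_isExclusive {Ω Ω' ι : Type*} [MeasurableSpace Ω]
    [MeasurableSpace Ω'] [Fintype ι] {G : ι → ι → Prop} {μ : Measure Ω} {ν : Measure Ω'}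
    [IsProbabilityMeasure μ] [IsProbabilityMeasure ν] {A : ι → Set Ω'} {B : ι → Set Ω}
    (hA : ∀ i, MeasurableSet (A i)) (hAindep : IndepOfNonNeighbors ν G A)
    (hAexcl : IsExclusive ν G A) (hB : ∀ i, MeasurableSet (B i))
    (hBindep : IndepOfNonNeighbors μ G B) (hBA : ∀ i, μ.real (B i) ≤ ν.real (A i))
    (hpos : 0 < avoidProb ν A Finset.univ) :
    avoidProb ν A Finset.univ ≤ avoidProb μ B Finset.univ := by
  classical
  have hApos (V : Finset ι) : 0 < avoidProb ν A V :=
    hpos.trans_le <| measureReal_mono <|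
      Set.biInter_mono (Finset.coe_subset.2 V.subset_univ) fun _ _ => subset_rfl
  have key := mul_le_mul_of_avoidance_recursions (fun i V => {j ∈ V | ¬ G i j})
    (fun i V => Finset.filter_subset _ V) (fun i => measureReal_nonneg) hApos
    (fun i V hi => avoidProb_eq_insert_add_mul hA hAindep hAexcl hi)
    (fun i V hi => (avoidProb_le_insert_add_mul hB hBindep hi).trans <|
      add_le_add_right (mul_le_mul_of_nonneg_right (hBA i) measureReal_nonneg) _)
    (Finset.empty_subset Finset.univ)
  simpa [avoidProb] using key

theorem indepOfNonNeighbors_pi {ι κ : Type*} [Fintype κ] {α : κ → Type*}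
    [∀ k, MeasurableSpace (α k)] (ν : ∀ k, Measure (α k)) [∀ k, IsProbabilityMeasure (ν k)]
    {G : ι → ι → Prop} {D : ι → Set (Π k, α k)} {S : ι → Set κ}
    (hD : ∀ i, MeasurableSet (D i)) (hDS : ∀ i, DependsOn (· ∈ D i) (S i))
    (hS : Pairwise fun i j => ¬ G i j → Disjoint (S i) (S j)) :
    IndepOfNonNeighbors (Measure.pi ν) G D := by
  intro i C hiC hC
  rw [avoidProb, measureReal_def, measureReal_def, measureReal_def, ← ENNReal.toReal_mul,
    measure_pi_inter_eq_mul_of_dependsOn ν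
      (Set.disjoint_iUnion₂_right.2 fun j hj => hS (ne_of_mem_of_not_mem hj hiC).symm (hC j hj))
      (hD i) (Finset.measurableSet_biInter C fun j _ => (hD j).compl) (hDS i)
      (dependsOn_mem_biInter C fun j _ => (hDS j).mem_compl)]

theorem measure_iUnion_lt_one_of_avoidProb_pos {Ω ι : Type*} [MeasurableSpace Ω] [Fintype ι]
    {μ : Measure Ω} [IsProbabilityMeasure μ] {D : ι → Set Ω} (hD : ∀ i, MeasurableSet (D i))
    (h : 0 < avoidProb μ D Finset.univ) : μ (⋃ i, D i) < 1 := by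
  have h' : 0 < μ.real (⋂ i, (D i)ᶜ) := by simpa [avoidProb] using h
  have hcompl : μ (⋃ i, D i)ᶜ ≠ 0 := by
    rw [Set.compl_iUnion]
    exact fun h0 => h'.ne' (by simp [measureReal_def, h0])
  rw [prob_compl_eq_one_sub (MeasurableSet.iUnion hD)] at hcompl
  exact lt_of_le_of_ne prob_le_one fun h1 => hcompl (by rw [h1, tsub_self])

instance : IsProbabilityMeasure (volume.restrict (Set.Icc (0:ℝ) 1)) := ⟨by simp⟩

instance (m : ℕ) : IsProbabilityMeasure (cubeMeasure m) := by
  unfold cubeMeasure; infer_instance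

theorem measurePreserving_comp_inl {κ₁ κ₂ α : Type*} [Fintype κ₁] [Fintype κ₂]
    [MeasurableSpace α] (ν : Measure α) [IsProbabilityMeasure ν] :
    MeasurePreserving (· ∘ Sum.inl) (Measure.pi fun _ : κ₁ ⊕ κ₂ => ν) (Measure.pi fun _ => ν) :=
  measurePreserving_fst.comp (measurePreserving_sumPiEquivProdPi fun _ => ν)

theorem volume_restrict_Icc_Iic {t : ℝ} (ht : t ≤ 1) :
    volume.restrict (Set.Icc (0:ℝ) 1) (Set.Iic t) = ENNReal.ofReal t := by
  have : Set.Iic t ∩ Set.Icc 0 1 = Set.Icc 0 t := by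
    ext x; simp only [Set.mem_inter_iff, Set.mem_Iic, Set.mem_Icc]; grind
  rw [Measure.restrict_apply measurableSet_Iic, this, Real.volume_Icc, sub_zero]

theorem volume_restrict_Icc_Ioi_pos {t : ℝ} (ht : t < 1) :
    0 < volume.restrict (Set.Icc (0:ℝ) 1) (Set.Ioi t) := by
  have : Set.Ioo (max t 0) 1 ⊆ Set.Ioi t ∩ Set.Icc 0 1 := fun x ⟨hx0, hx1⟩ =>
    ⟨(le_max_left t 0).trans_lt hx0, (le_max_right t 0).trans hx0.le, hx1.le⟩
  rw [Measure.restrict_apply measurableSet_Ioi]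
  refine lt_of_lt_of_le ?_ (measure_mono this)
  simp [Real.volume_Ioo, ht]

def SharesNeighbor {α β : Type*} (E : α → β → Prop) (i j : α) : Prop := ∃ k, E i k ∧ E j k

section Thinning

variable {n m : ℕ}

noncomputable abbrev sumCubeMeasure (m n : ℕ) : Measure (Fin m ⊕ Fin n → ℝ) :=
  Measure.pi fun _ => volume.restrict (Set.Icc 0 1)

def thinning (A : Fin n → Set (Fin m → ℝ)) (t : ℝ) (i : Fin n) : Set (Fin m ⊕ Fin n → ℝ) :=
  (· ∘ Sum.inl) ⁻¹' A i ∩ {x | x (Sum.inr i) ≤ t}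

variable {A : Fin n → Set (Fin m → ℝ)} {t : ℝ}

theorem measurableSet_thinning (hA : ∀ i, MeasurableSet (A i)) (i : Fin n) :
    MeasurableSet (thinning A t i) :=
  (measurable_pi_lambda _ (fun j => measurable_pi_apply (Sum.inl j)) (hA i)).inter
    (measurableSet_le (measurable_pi_apply _) measurable_const)

theorem sumCubeMeasure_thinning (hA : ∀ i, MeasurableSet (A i)) (ht : t ≤ 1) (i : Fin n) :
    sumCubeMeasure m n (thinning A t i) = cubeMeasure m (A i) * ENNReal.ofReal t := by
  set X : Set (Fin m ⊕ Fin n → ℝ) := (· ∘ Sum.inl) ⁻¹' A i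
  set Y : Set (Fin m ⊕ Fin n → ℝ) := {x | x (Sum.inr i) ≤ t}
  have hXm : MeasurableSet X := measurable_pi_lambda _ (fun j => measurable_pi_apply _) (hA i)
  have hYm : MeasurableSet Y := measurableSet_le (measurable_pi_apply _) measurable_const
  have hX : DependsOn (· ∈ X) (Set.range Sum.inl) :=
    fun x y hxy => congrArg (· ∈ A i) (funext fun j => hxy _ ⟨j, rfl⟩)
  have hY : DependsOn (· ∈ Y) {Sum.inr i} := fun x y hxy => by simp [Y, hxy _ rfl]
  rw [thinning, sumCubeMeasure,
    measure_pi_inter_eq_mul_of_dependsOn _ (by simp) hXm hYm hX hY]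
  congr 1
  · exact (measurePreserving_comp_inl _).measure_preimage (hA i).nullMeasurableSet
  · rw [← volume_restrict_Icc_Iic ht]
    exact (measurePreserving_eval _ (Sum.inr i)).measure_preimage
      measurableSet_Iic.nullMeasurableSet

theorem isExclusive_thinning {G : Fin n → Fin n → Prop} (hA : IsExclusive (cubeMeasure m) G A) :
    IsExclusive (sumCubeMeasure m n) G (thinning A t) := fun _ _ hij hG =>
  measure_mono_null (Set.inter_subset_inter Set.inter_subset_left Set.inter_subset_left)
    ((measurePreserving_comp_inl _).quasiMeasurePreserving.preimage_null (hA hij hG))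

theorem dependsOn_thinning {E : Fin n → Fin m → Prop} (hA : ∀ i, DependsOnlyOn (A i) {k | E i k})
    (i : Fin n) : DependsOn (· ∈ thinning A t i) {z | Sum.elim (E i) (· = i) z} := by
  intro x y hxy
  have hinl : x ∘ Sum.inl ∈ A i ↔ y ∘ Sum.inl ∈ A i :=
    hA i _ _ fun k hk => hxy (Sum.inl k) hk
  simp only [thinning, Set.mem_inter_iff, Set.mem_preimage, Set.mem_ofPred_eq,
    hxy (Sum.inr i) rfl, hinl]

theorem avoidProb_thinning_pos (ht : t < 1) :
    0 < avoidProb (sumCubeMeasure m n) (thinning A t) Finset.univ := by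
  set box : Set (Fin m ⊕ Fin n → ℝ) :=
    Set.univ.pi (Sum.elim (fun _ => Set.univ) fun _ => Set.Ioi t)
  have hbox : box ⊆ ⋂ i ∈ Finset.univ, (thinning A t i)ᶜ := by
    refine fun x hx => Set.mem_iInter₂.2 fun i _ hxi => ?_
    have hlt : t < x (Sum.inr i) := hx (Sum.inr i) trivial
    exact hlt.not_ge hxi.2
  have hpos : sumCubeMeasure m n box ≠ 0 := by
    rw [sumCubeMeasure, Measure.pi_pi, Finset.prod_ne_zero_iff]
    rintro (k | k) _
    · simp
    · exact (volume_restrict_Icc_Ioi_pos ht).ne'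
  exact ENNReal.toReal_pos (fun h => hpos (measure_mono_null hbox h)) (measure_ne_top _ _)

theorem indepOfNonNeighbors_thinning {E : Fin n → Fin m → Prop} (hA : Conforms E A) :
    IndepOfNonNeighbors (sumCubeMeasure m n) (SharesNeighbor E) (thinning A t) := by
  refine indepOfNonNeighbors_pi _ (measurableSet_thinning hA.1) (dependsOn_thinning hA.2)
    fun i j hij hG => Set.disjoint_left.2 fun z hi hj => ?_
  cases z with
  | inl k => exact hG ⟨k, hi, hj⟩
  | inr l => exact hij (hi.symm.trans hj)

end Thinning

theorem indepOfNonNeighbors_of_conforms {n m : ℕ} {E : Fin n → Fin m → Prop}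
    {B : Fin n → Set (Fin m → ℝ)} (hB : Conforms E B) :
    IndepOfNonNeighbors (cubeMeasure m) (SharesNeighbor E) B :=
  indepOfNonNeighbors_pi _ hB.1 (fun i => dependsOnlyOn_iff_dependsOn.1 (hB.2 i))
    fun _ _ _ hG => Set.disjoint_left.2 fun k hi hj => hG ⟨k, hi, hj⟩

theorem stmt5_general {n m : ℕ} (E : Fin n → Fin m → Prop) (p : Fin n → ℝ)
    (A : Fin n → Set (Fin m → ℝ)) (hA : Conforms E A)
    (hmeasure : ∀ i, cubeMeasure m (A i) = ENNReal.ofReal (p i))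
    (hexc : ∀ i j, i ≠ j → (∃ k, E i k ∧ E j k) → cubeMeasure m (A i ∩ A j) = 0) :
    ∀ ε ∈ Set.Ioo (0:ℝ) 1,
      ∀ B : Fin n → Set (Fin m → ℝ), Conforms E B →
        (∀ i, cubeMeasure m (B i) = ENNReal.ofReal ((1 - ε) * p i)) →
        cubeMeasure m (⋃ i, B i) < 1 := by
  rintro ε ⟨hε0, hε1⟩ B hB hBmeasure
  have hAexcl : IsExclusive (cubeMeasure m) (SharesNeighbor E) A := fun i j => hexc i j
  have hBA (i : Fin n) :
      (cubeMeasure m).real (B i) ≤ (sumCubeMeasure m n).real (thinning A (1 - ε) i) := by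
    rw [measureReal_def, measureReal_def, sumCubeMeasure_thinning hA.1 (by linarith), hBmeasure,
      hmeasure, ENNReal.ofReal_mul (by linarith), mul_comm]
  have hpos := avoidProb_thinning_pos (A := A) (n := n) (by linarith : 1 - ε < 1)
  refine measure_iUnion_lt_one_of_avoidProb_pos hB.1 (hpos.trans_le ?_)
  exact avoidProb_le_avoidProb_of_isExclusive (measurableSet_thinning hA.1)
    (indepOfNonNeighbors_thinning hA) (isExclusive_thinning hAexcl) hB.1
    (indepOfNonNeighbors_of_conforms hB) hBA hpos

theorem stmt5 {n m : ℕ} (E : Fin n → Fin m → Prop) (p : Fin n → ℝ)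
    (hp : ∀ i, 0 < p i)
    (A : Fin n → Set (Fin m → ℝ)) (hA : Conforms E A)
    (hmeasure : ∀ i, cubeMeasure m (A i) = ENNReal.ofReal (p i))
    (hexc : ∀ i j, i ≠ j → (∃ k, E i k ∧ E j k) → cubeMeasure m (A i ∩ A j) = 0) :
    ∀ ε ∈ Set.Ioo (0:ℝ) 1,
      ∀ B : Fin n → Set (Fin m → ℝ), Conforms E B →
        (∀ i, cubeMeasure m (B i) = ENNReal.ofReal ((1 - ε) * p i)) →
        cubeMeasure m (⋃ i, B i) < 1 :=
  stmt5_general E p A hA hmeasure hexc
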